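/- Suppose z_c = 0. Then c² is a multiple root (multiplicity ≥ 2) of f(λ) = det(λH + S) if and only if r² = −c² + c²(x_c² + y_c²)/(a² + c²). Moreover, in this case c² is a triple root if and only if c² = a·r. -/

import Mathlib

open Matrix Polynomial

noncomputable def Hmat (a c : ℝ) : Matrix (Fin 4) (Fin 4) ℝ :=
  !![1/a^2, 0, 0, 0; 0, 1/a^2, 0, 0; 0, 0, -(1/c^2), 0; 0, 0, 0, -1]

noncomputable def Smat (r xc yc zc : ℝ) : Matrix (Fin 4) (Fin 4) ℝ :=
  !![1, 0, 0, -xc; 0, 1, 0, -yc; 0, 0, 1, -zc;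
     -xc, -yc, -zc, xc^2 + yc^2 + zc^2 - r^2]

/-- `f(λ) = det (λ H + S)` as a function of `λ`. -/
noncomputable def fval (a c r xc yc zc l : ℝ) : ℝ :=
  (l • Hmat a c + Smat r xc yc zc).det

/-- `f(λ) = det (λ H + S)` as a polynomial in `λ`. -/
noncomputable def fpoly (a c r xc yc zc : ℝ) : Polynomial ℝ :=
  ((X : Polynomial ℝ) • (Hmat a c).map C + (Smat r xc yc zc).map C).det

/-! With `z_c = 0` the determinant factors as
`f(λ) = (λ - c²) (λ + a²) (λ² - (x_c² + y_c² - r² - a²) λ + a² r²) / (c² a⁴)`,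
so `c²` is a multiple root exactly when it is a root of the quadratic factor. The other root of
that quadratic is then `a² r² / c²` (Vieta), which equals `c²` exactly when `c² = a r`. -/

lemma monic_X_sq_sub_C_mul_X_add_C {R : Type*} [CommRing R] [Nontrivial R] (b p : R) :
    (X^2 - C b * X + C p : R[X]).Monic := by
  monicity!

lemma X_sq_sub_C_mul_X_add_C_eq_mul {R : Type*} [CommRing R] {b p z : R}
    (hz : (X^2 - C b * X + C p : R[X]).IsRoot z) :
    X^2 - C b * X + C p = (X - C z) * (X - C (b - z)) := by
  simp only [IsRoot, eval_add, eval_sub, eval_mul, eval_pow, eval_X, eval_C] at hz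
  obtain rfl : p = b * z - z^2 := by linear_combination hz
  simp only [map_sub, map_mul, map_pow]
  ring

lemma rootMultiplicity_X_sub_C_mul_X_sub_C_self {R : Type*} [CommRing R] [IsDomain R]
    [DecidableEq R] (z w : R) :
    rootMultiplicity z ((X - C z) * (X - C w)) = if z = w then 2 else 1 := by
  rw [rootMultiplicity_mul (mul_ne_zero (X_sub_C_ne_zero z) (X_sub_C_ne_zero w)),
    rootMultiplicity_X_sub_C_self, rootMultiplicity_X_sub_C]
  split_ifs <;> rfl

noncomputable def quadFactor (a r s : ℝ) : ℝ[X] :=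
  X^2 - C (s - r^2 - a^2) * X + C (a^2 * r^2)

lemma eval_fpoly (a c r xc yc zc l : ℝ) :
    (fpoly a c r xc yc zc).eval l = fval a c r xc yc zc l := by
  rw [fpoly, fval, ← coe_evalRingHom, RingHom.map_det]
  congr 1
  ext i j
  simp [smul_eq_mul, mul_comm l]

lemma fval_zc_zero {a c : ℝ} (ha : a ≠ 0) (hc : c ≠ 0) (r xc yc l : ℝ) :
    fval a c r xc yc 0 l = 1 / (c^2 * a^4) * ((l - c^2) * ((l + a^2) *
      (l^2 - (xc^2 + yc^2 - r^2 - a^2) * l + a^2 * r^2))) := by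
  rw [fval, det_succ_row_zero]
  simp [Fin.sum_univ_succ, det_fin_three, Hmat, Smat, Fin.succAbove]
  field_simp
  ring

lemma fpoly_zc_zero {a c : ℝ} (ha : a ≠ 0) (hc : c ≠ 0) (r xc yc : ℝ) :
    fpoly a c r xc yc 0 =
      C (1 / (c^2 * a^4)) * ((X - C (c^2)) * ((X + C (a^2)) * quadFactor a r (xc^2 + yc^2))) := by
  refine Polynomial.funext fun l => ?_
  rw [eval_fpoly, fval_zc_zero ha hc]
  simp [quadFactor]

lemma quadFactor_ne_zero (a r s : ℝ) : quadFactor a r s ≠ 0 :=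
  (monic_X_sq_sub_C_mul_X_add_C _ _).ne_zero

lemma rootMultiplicity_fpoly_zc_zero {a c : ℝ} (ha : a ≠ 0) (hc : c ≠ 0) (r xc yc : ℝ) :
    (fpoly a c r xc yc 0).rootMultiplicity (c^2) =
      1 + (quadFactor a r (xc^2 + yc^2)).rootMultiplicity (c^2) := by
  have hk : (C (1 / (c^2 * a^4)) : ℝ[X]) ≠ 0 := C_ne_zero.mpr (by positivity)
  have hXa : ¬ (X + C (a^2) : ℝ[X]).IsRoot (c^2) := by
    simp only [IsRoot, eval_add, eval_X, eval_C]
    positivity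
  have hXaQ := mul_ne_zero (X_add_C_ne_zero (a^2)) (quadFactor_ne_zero a r (xc^2 + yc^2))
  rw [fpoly_zc_zero ha hc,
    rootMultiplicity_mul (mul_ne_zero hk (mul_ne_zero (X_sub_C_ne_zero _) hXaQ)),
    rootMultiplicity_mul (mul_ne_zero (X_sub_C_ne_zero _) hXaQ), rootMultiplicity_mul hXaQ,
    rootMultiplicity_C, rootMultiplicity_X_sub_C_self, rootMultiplicity_eq_zero hXa,
    zero_add, zero_add]

lemma sq_eq_neg_add_div_iff {a c r s : ℝ} (ha : a ≠ 0) :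
    r^2 = -c^2 + c^2 * s / (a^2 + c^2) ↔ (r^2 + c^2) * (a^2 + c^2) = c^2 * s := by
  rw [eq_neg_add_iff_add_eq, eq_div_iff (by positivity), add_comm (c^2)]

lemma isRoot_quadFactor_sq_iff {a c r s : ℝ} (ha : a ≠ 0) :
    (quadFactor a r s).IsRoot (c^2) ↔ r^2 = -c^2 + c^2 * s / (a^2 + c^2) := by
  rw [sq_eq_neg_add_div_iff ha, IsRoot, quadFactor]
  simp only [eval_add, eval_sub, eval_mul, eval_pow, eval_X, eval_C]
  constructor <;> intro h <;> linear_combination h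

lemma sub_eq_sq_iff_sq_eq_mul {a c r s : ℝ} (ha : 0 < a) (hc : c ≠ 0) (hr : 0 < r)
    (h : r^2 = -c^2 + c^2 * s / (a^2 + c^2)) :
    s - r^2 - a^2 - c^2 = c^2 ↔ c^2 = a * r := by
  have hprod : (s - r^2 - a^2 - c^2) * c^2 = (a * r)^2 := by
    linear_combination -(sq_eq_neg_add_div_iff ha.ne').mp h
  constructor
  · intro hw
    rw [hw, ← sq] at hprod
    exact (sq_eq_sq₀ (by positivity) (by positivity)).mp hprod
  · intro hcar
    rw [← hcar] at hprod
    exact mul_right_cancel₀ (pow_ne_zero 2 hc) (hprod.trans (sq (c^2)))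

theorem stmt7 (a c r xc yc : ℝ) (ha : 0 < a) (hc : 0 < c) (hr : 0 < r) :
    (2 ≤ (fpoly a c r xc yc 0).rootMultiplicity (c^2) ↔
      r^2 = -c^2 + c^2 * (xc^2 + yc^2) / (a^2 + c^2)) ∧
    (r^2 = -c^2 + c^2 * (xc^2 + yc^2) / (a^2 + c^2) →
      ((fpoly a c r xc yc 0).rootMultiplicity (c^2) = 3 ↔ c^2 = a * r)) := by
  rw [rootMultiplicity_fpoly_zc_zero ha.ne' hc.ne', ← isRoot_quadFactor_sq_iff ha.ne']
  set s := xc^2 + yc^2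
  refine ⟨?_, fun hroot => ?_⟩
  · rw [← rootMultiplicity_pos (quadFactor_ne_zero a r s)]
    omega
  · have hQ : quadFactor a r s = (X - C (c^2)) * (X - C (s - r^2 - a^2 - c^2)) :=
      X_sq_sub_C_mul_X_add_C_eq_mul hroot
    rw [hQ, rootMultiplicity_X_sub_C_mul_X_sub_C_self,
      ← sub_eq_sq_iff_sq_eq_mul ha hc.ne' hr ((isRoot_quadFactor_sq_iff ha.ne').mp hroot)]
    split_ifs with h
    · exact iff_of_true rfl h.symm
    · exact iff_of_false (by omega) (Ne.symm h)
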